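/- arXiv:1805.02015 — 5 statements merged into one kernel-verified Lean document; each statement's English description precedes it below -/
import Mathlib

section
/- Let N be a normal subgroup of a finite group G such that G/N is isomorphic to the Klein four group C₂ × C₂. Then for any G-stable linear character τ of N (meaning τ(gng⁻¹) = τ(n) for all g ∈ G, n ∈ N), the square τ² extends to a linear character of G. -/
/-!
By `G`-stability, `β g h := τ ⁅g, h⁆` is bimultiplicative and trivial on `N`, and
`τ ((g h)²) = β g h * τ (g²) * τ (h²)`, since `(g h)² = ⁅g, h⁆ · h g² h⁻¹ · h²`.
So `β` descends to an alternating pairing on `G ⧸ N ≅ C₂ × C₂`; it is symmetric since `u² = 1`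
and vanishes on each factor, so `ε (a, b) := β (a, 1) (1, b)` is a quadratic refinement:
`ε (u v) = ε u * ε v * β u v`.
Then `g ↦ τ (g²) / ε (g N)` is a homomorphism extending `τ²`.
-/

open scoped commutatorElement

theorem exists_quadraticRefinement_prod {A B M : Type*} [Group A] [Group B] [CommGroup M]
    (β : A × B →* A × B →* M) (hA : ∀ a a' : A, β (a, 1) (a', 1) = 1)
    (hB : ∀ b b' : B, β (1, b) (1, b') = 1) (hsymm : ∀ u v, β u v = β v u) :
    ∃ ε : A × B → M, ∀ u v, ε (u * v) = ε u * ε v * β u v := by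
  refine ⟨fun u => β (u.1, 1) (1, u.2), fun ⟨a, b⟩ ⟨a', b'⟩ => ?_⟩
  have split (a : A) (b : B) : ((a, b) : A × B) = (a, 1) * (1, b) := by simp
  have hmulA : ((a * a', 1) : A × B) = (a, 1) * (a', 1) := by simp
  have hmulB : ((1, b * b') : A × B) = (1, b) * (1, b') := by simp
  simp only [Prod.mk_mul_mk]
  rw [hmulA, hmulB, split a b, split a' b']
  simp only [map_mul, MonoidHom.mul_apply, hA, hB, hsymm (1, b) (a', 1), mul_one, one_mul]
  simp only [mul_comm, mul_left_comm]

theorem pairing_eq_one_of_isCyclic {C M : Type*} [Group C] [IsCyclic C] [CommGroup M]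
    (β : C →* C →* M) (hβ : ∀ c, β c c = 1) (c c' : C) : β c c' = 1 := by
  obtain ⟨g, hg⟩ := IsCyclic.exists_generator (α := C)
  obtain ⟨i, rfl⟩ := Subgroup.mem_zpowers_iff.mp (hg c)
  obtain ⟨j, rfl⟩ := Subgroup.mem_zpowers_iff.mp (hg c')
  simp [map_zpow, hβ]

theorem pairing_symm_of_mul_self_eq_one {Q M : Type*} [Group Q] [CommGroup M]
    (hQ : ∀ u : Q, u * u = 1) (β : Q →* Q →* M) (hβ : ∀ u, β u u = 1) (u v : Q) :
    β u v = β v u := by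
  have hanti : β u v * β v u = 1 := by simpa [hβ] using hβ (u * v)
  have hsq : β u v * β u v = 1 := by
    rw [← MonoidHom.mul_apply, ← map_mul, hQ, map_one, MonoidHom.one_apply]
  exact mul_left_cancel (hsq.trans hanti.symm)

theorem IsKleinFour.exists_quadraticRefinement {Q M : Type*} [Group Q] [IsKleinFour Q]
    [CommGroup M] (β : Q →* Q →* M) (hβ : ∀ u, β u u = 1) :
    ∃ ε : Q → M, ∀ u v, ε (u * v) = ε u * ε v * β u v := by
  obtain ⟨e₀⟩ := IsKleinFour.nonempty_mulEquiv (G₁ := Q) (G₂ := Multiplicative (ZMod 2 × ZMod 2))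
  set e := e₀.trans (MulEquiv.prodMultiplicative _ _)
  set f := e.symm.toMonoidHom
  set β' := (MonoidHom.compHom' f).comp (β.comp f)
  have hβ' (w) : β' w w = 1 := hβ (f w)
  obtain ⟨ε, hε⟩ := exists_quadraticRefinement_prod β'
    (pairing_eq_one_of_isCyclic
      ((MonoidHom.compHom' (MonoidHom.inl _ _)).comp (β'.comp (MonoidHom.inl _ _)))
      (fun _ => hβ' _))
    (pairing_eq_one_of_isCyclic
      ((MonoidHom.compHom' (MonoidHom.inr _ _)).comp (β'.comp (MonoidHom.inr _ _)))
      (fun _ => hβ' _))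
    (fun w w' => pairing_symm_of_mul_self_eq_one IsKleinFour.mul_self β hβ (f w) (f w'))
  refine ⟨ε ∘ e, fun u v => ?_⟩
  simpa [β', f] using hε (e u) (e v)

section CommutatorPairing

variable {G M : Type*} [Group G] [CommGroup M] {N : Subgroup G}

theorem commutatorElement_mem_of_commutator_le (hN : commutator G ≤ N) (g h : G) : ⁅g, h⁆ ∈ N :=
  Subgroup.commutator_le.mp hN g trivial h trivial

variable [N.Normal]

def IsGStable (τ : N →* M) : Prop :=
  ∀ (g n : G) (hn : n ∈ N), τ ⟨g * n * g⁻¹, Subgroup.Normal.conj_mem ‹_› n hn g⟩ = τ ⟨n, hn⟩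

variable (τ : N →* M) (hN : commutator G ≤ N)

def commutatorPairing (g h : G) : M :=
  τ ⟨⁅g, h⁆, commutatorElement_mem_of_commutator_le hN g h⟩

variable {τ}

theorem commutatorPairing_mul_right (hτ : IsGStable τ) (g h k : G) :
    commutatorPairing τ hN g (h * k) = commutatorPairing τ hN g h * commutatorPairing τ hN g k := by
  have hk := commutatorElement_mem_of_commutator_le hN g k
  have split : (⟨⁅g, h * k⁆, commutatorElement_mem_of_commutator_le hN _ _⟩ : N) =
      ⟨⁅g, h⁆, commutatorElement_mem_of_commutator_le hN _ _⟩ *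
        ⟨h * ⁅g, k⁆ * h⁻¹, Subgroup.Normal.conj_mem ‹_› _ hk h⟩ :=
    Subtype.ext (by simp only [commutatorElement_def, Subgroup.coe_mul]; group)
  rw [commutatorPairing, split, map_mul, hτ]
  rfl

theorem commutatorPairing_mul_left (hτ : IsGStable τ) (g h k : G) :
    commutatorPairing τ hN (g * h) k = commutatorPairing τ hN g k * commutatorPairing τ hN h k := by
  have hk := commutatorElement_mem_of_commutator_le hN h k
  have split : (⟨⁅g * h, k⁆, commutatorElement_mem_of_commutator_le hN _ _⟩ : N) =
      ⟨g * ⁅h, k⁆ * g⁻¹, Subgroup.Normal.conj_mem ‹_› _ hk g⟩ *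
        ⟨⁅g, k⁆, commutatorElement_mem_of_commutator_le hN _ _⟩ :=
    Subtype.ext (by simp only [commutatorElement_def, Subgroup.coe_mul]; group)
  rw [commutatorPairing, split, map_mul, hτ, mul_comm]
  rfl

theorem commutatorPairing_of_mem_right (hτ : IsGStable τ) (g : G) {n : G} (hn : n ∈ N) :
    commutatorPairing τ hN g n = 1 := by
  have split : (⟨⁅g, n⁆, commutatorElement_mem_of_commutator_le hN _ _⟩ : N) =
      ⟨g * n * g⁻¹, Subgroup.Normal.conj_mem ‹_› _ hn g⟩ * (⟨n, hn⟩ : N)⁻¹ :=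
    Subtype.ext (by simp only [commutatorElement_def, Subgroup.coe_mul, Subgroup.coe_inv])
  rw [commutatorPairing, split, map_mul, hτ g n hn, map_inv, mul_inv_cancel]

theorem commutatorPairing_of_mem_left (hτ : IsGStable τ) {n : G} (hn : n ∈ N) (g : G) :
    commutatorPairing τ hN n g = 1 := by
  have split : (⟨⁅n, g⁆, commutatorElement_mem_of_commutator_le hN _ _⟩ : N) =
      (⟨n, hn⟩ : N) * (⟨g * n * g⁻¹, Subgroup.Normal.conj_mem ‹_› _ hn g⟩ : N)⁻¹ :=
    Subtype.ext (by simp only [commutatorElement_def, Subgroup.coe_mul, Subgroup.coe_inv]; group)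
  rw [commutatorPairing, split, map_mul, map_inv, hτ g n hn, mul_inv_cancel]

variable (τ) in
def quotientCommutatorPairing (hτ : IsGStable τ) : G ⧸ N →* G ⧸ N →* M :=
  QuotientGroup.lift N
    (MonoidHom.mk'
      (fun g => QuotientGroup.lift N
        (MonoidHom.mk' (commutatorPairing τ hN g) (commutatorPairing_mul_right hN hτ g))
        (fun _ hn => commutatorPairing_of_mem_right hN hτ g hn))
      (fun g h => QuotientGroup.monoidHom_ext N <| MonoidHom.ext fun k =>
        commutatorPairing_mul_left hN hτ g h k))
    (fun _ hn => QuotientGroup.monoidHom_ext N <| MonoidHom.ext fun k =>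
      commutatorPairing_of_mem_left hN hτ hn k)

@[simp]
theorem quotientCommutatorPairing_mk (hτ : IsGStable τ) (g h : G) :
    quotientCommutatorPairing τ hN hτ g h = commutatorPairing τ hN g h :=
  rfl

theorem quotientCommutatorPairing_self (hτ : IsGStable τ) (u : G ⧸ N) :
    quotientCommutatorPairing τ hN hτ u u = 1 := by
  induction u using QuotientGroup.induction_on with
  | H g => exact (congrArg τ (Subtype.ext (commutatorElement_self g))).trans (map_one τ)

theorem map_sq_mul (hτ : IsGStable τ) (hsq : ∀ g : G, g ^ 2 ∈ N) (g h : G) :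
    τ ⟨(g * h) ^ 2, hsq _⟩ =
      commutatorPairing τ hN g h * τ ⟨g ^ 2, hsq g⟩ * τ ⟨h ^ 2, hsq h⟩ := by
  have split : (⟨(g * h) ^ 2, hsq _⟩ : N) =
      ⟨⁅g, h⁆, commutatorElement_mem_of_commutator_le hN _ _⟩ *
        ⟨h * g ^ 2 * h⁻¹, Subgroup.Normal.conj_mem ‹_› _ (hsq g) h⟩ * ⟨h ^ 2, hsq h⟩ :=
    Subtype.ext (by simp only [commutatorElement_def, Subgroup.coe_mul, sq]; group)
  rw [split, map_mul, map_mul, hτ]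
  rfl

theorem exists_extension_sq_of_quadraticRefinement (hτ : IsGStable τ)
    (hsq : ∀ g : G, g ^ 2 ∈ N) (ε : G ⧸ N → M)
    (hε : ∀ u v, ε (u * v) = ε u * ε v * quotientCommutatorPairing τ hN hτ u v) :
    ∃ lam : G →* M, ∀ (n : G) (hn : n ∈ N), lam n = τ ⟨n, hn⟩ ^ 2 := by
  have hε_one : ε 1 = 1 := by simpa using (hε 1 1).symm
  refine ⟨MonoidHom.mk' (fun g => τ ⟨g ^ 2, hsq g⟩ / ε g) fun g h => ?_, fun n hn => ?_⟩
  · simp only [map_sq_mul hN hτ hsq, QuotientGroup.mk_mul, hε, quotientCommutatorPairing_mk]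
    rw [div_mul_div_comm, mul_assoc, mul_comm (commutatorPairing τ hN g h),
      mul_div_mul_right_eq_div]
  · simp only [MonoidHom.mk'_apply, (QuotientGroup.eq_one_iff n).mpr hn, hε_one, div_one]
    exact map_pow τ ⟨n, hn⟩ 2

end CommutatorPairing

theorem stmt_1_general {G : Type*} [Group G] (N : Subgroup G) [hN : N.Normal]
    [IsKleinFour (G ⧸ N)]
    (τ : N →* ℂˣ)
    (hτ : ∀ (g n : G) (hn : n ∈ N), τ ⟨g * n * g⁻¹, hN.conj_mem n hn g⟩ = τ ⟨n, hn⟩) :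
    ∃ lam : G →* ℂˣ, ∀ (n : G) (hn : n ∈ N), lam n = (τ ⟨n, hn⟩) ^ 2 := by
  have hsq (g : G) : g ^ 2 ∈ N := by
    rw [← QuotientGroup.eq_one_iff, QuotientGroup.mk_pow, sq, IsKleinFour.mul_self]
  have hcomm : commutator G ≤ N :=
    Subgroup.Normal.quotient_commutative_iff_commutator_le.mp IsKleinFour.isMulCommutative
  obtain ⟨ε, hε⟩ := IsKleinFour.exists_quadraticRefinement
    (quotientCommutatorPairing τ hcomm hτ) (quotientCommutatorPairing_self hcomm hτ)
  exact exists_extension_sq_of_quadraticRefinement hcomm hτ hsq ε hε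

/-- If `G/N` is a Klein four group and `τ` is a `G`-stable linear character of `N`,
then `τ²` extends to a linear character of `G`. -/
theorem stmt_1 {G : Type*} [Group G] [Finite G] (N : Subgroup G) [hN : N.Normal]
    [IsKleinFour (G ⧸ N)]
    (τ : N →* ℂˣ)
    (hτ : ∀ (g n : G) (hn : n ∈ N), τ ⟨g * n * g⁻¹, hN.conj_mem n hn g⟩ = τ ⟨n, hn⟩) :
    ∃ lam : G →* ℂˣ, ∀ (n : G) (hn : n ∈ N), lam n = (τ ⟨n, hn⟩) ^ 2 :=
  stmt_1_general N (hN := hN) τ hτ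
end

section
/- Let N be a normal subgroup of a finite group G such that G/N is cyclic, and let τ be a G-stable linear character of N. Then τ extends to a linear character of G. -/
/-! Pick `g ∈ G` whose image generates `G/N`, so that every element of `G` is `g ^ k * n` with
`n ∈ N`. Let `d` be the order of `gN` and `z` a `d`-th root of `τ (g ^ d)`; then `k ↦ z ^ k` agrees
with `τ` on the powers of `g` lying in `N`, and `g ^ k * n ↦ z ^ k * τ n` is well defined. It is
multiplicative because `g ^ a * n * g ^ b * n' = g ^ (a + b) * (g ^ (-b) * n * g ^ b) * n'`
and `τ` is invariant under conjugation. -/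

noncomputable instance IsAlgClosed.rootableByUnits {K : Type*} [Field K] [IsAlgClosed K] :
    RootableBy Kˣ ℕ :=
  rootableByOfPowLeftSurj _ _ fun {n} hn a => by
    obtain ⟨w, hw⟩ := IsAlgClosed.exists_pow_nat_eq (a : K) (Nat.pos_of_ne_zero hn)
    have hw0 : w ≠ 0 := by
      rintro rfl
      exact a.ne_zero (by rw [← hw, zero_pow hn])
    exact ⟨Units.mk0 w hw0, Units.ext (by simpa using hw)⟩

namespace Subgroup

variable {G A : Type*} [Group G] [CommGroup A] {N : Subgroup G}

theorem zpow_mul_map_eq_of_zpow_mul_eq (τ : N →* A) {g : G} {z : A}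
    (hz : ∀ (m : ℤ) (n : N), g ^ m = n → τ n = z ^ m)
    {k k' : ℤ} {n n' : N} (h : g ^ k * n = g ^ k' * n') : z ^ k * τ n = z ^ k' * τ n' := by
  have hgn : g ^ (k' - k) = ↑(n * n'⁻¹) := by
    rw [coe_mul, coe_inv, eq_mul_inv_iff_mul_eq, ← mul_right_inj (g ^ k), h, ← mul_assoc,
      ← zpow_add, add_sub_cancel]
  have := hz _ _ hgn
  rw [map_mul, map_inv, zpow_sub, mul_inv_eq_iff_eq_mul] at this
  rw [this]
  group

variable [N.Normal]

theorem exists_eq_zpow_mul_of_forall_mem_zpowers {g : G}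
    (hg : ∀ q : G ⧸ N, q ∈ zpowers (g : G ⧸ N)) (x : G) : ∃ (k : ℤ) (n : N), x = g ^ k * n := by
  obtain ⟨k, hk⟩ := mem_zpowers_iff.mp (hg x)
  refine ⟨k, ⟨(g ^ k)⁻¹ * x, QuotientGroup.eq.mp ?_⟩, by simp⟩
  simpa using hk

theorem exists_map_eq_zpow_of_zpow_eq [RootableBy A ℕ] (τ : N →* A) (g : G) :
    ∃ z : A, ∀ (m : ℤ) (n : N), g ^ m = n → τ n = z ^ m := by
  set d := orderOf (g : G ⧸ N)
  have hgd : g ^ d ∈ N := by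
    rw [← QuotientGroup.eq_one_iff, QuotientGroup.mk_pow, pow_orderOf_eq_one]
  refine ⟨RootableBy.root (τ ⟨g ^ d, hgd⟩) d, fun m n hmn => ?_⟩
  obtain ⟨j, rfl⟩ : (d : ℤ) ∣ m := by
    rw [orderOf_dvd_iff_zpow_eq_one, ← QuotientGroup.mk_zpow, QuotientGroup.eq_one_iff, hmn]
    exact n.2
  have hn : n = ⟨g ^ d, hgd⟩ ^ j := Subtype.ext (by simp [← hmn, zpow_mul])
  rcases eq_or_ne d 0 with hd | hd
  · have : (⟨g ^ d, hgd⟩ : N) = 1 := Subtype.ext (show g ^ d = 1 by rw [hd, pow_zero])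
    rw [hn, this, one_zpow, map_one, hd, Nat.cast_zero, zero_mul, zpow_zero]
  · rw [hn, map_zpow, zpow_mul, zpow_natCast, RootableBy.root_cancel _ hd]

theorem exists_monoidHom_restrict_eq_of_zpow_mul (τ : N →* A) {g : G} {z : A}
    (hτ : ∀ (a : G) (n : N), τ (MulAut.conjNormal a n) = τ n)
    (hg : ∀ x : G, ∃ (k : ℤ) (n : N), x = g ^ k * n)
    (hz : ∀ (m : ℤ) (n : N), g ^ m = n → τ n = z ^ m) :
    ∃ χ : G →* A, ∀ n : N, χ n = τ n := by
  choose k n hkn using hg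
  have value_eq (x : G) {k' : ℤ} {n' : N} (h : x = g ^ k' * n') :
      z ^ k x * τ (n x) = z ^ k' * τ n' :=
    zpow_mul_map_eq_of_zpow_mul_eq τ hz ((hkn x).symm.trans h)
  refine ⟨MonoidHom.mk' (fun x => z ^ k x * τ (n x)) fun x y => ?_, fun m => ?_⟩
  · have hxy : x * y = g ^ (k x + k y) * ↑(MulAut.conjNormal (g ^ k y)⁻¹ (n x) * n y) := by
      rw [coe_mul, MulAut.conjNormal_apply, zpow_add]
      nth_rw 1 [hkn x, hkn y]
      group
    rw [value_eq _ hxy, map_mul, hτ, zpow_add]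
    exact mul_mul_mul_comm _ _ _ _
  · exact (value_eq m (by rw [zpow_zero, one_mul])).trans (by rw [zpow_zero, one_mul])

end Subgroup

open Subgroup in
theorem stmt_2_general {G : Type*} [Group G] (N : Subgroup G) [hN : N.Normal]
    [IsCyclic (G ⧸ N)]
    (τ : N →* ℂˣ)
    (hτ : ∀ (g n : G) (hn : n ∈ N), τ ⟨g * n * g⁻¹, hN.conj_mem n hn g⟩ = τ ⟨n, hn⟩) :
    ∃ lam : G →* ℂˣ, ∀ (n : G) (hn : n ∈ N), lam n = τ ⟨n, hn⟩ := by
  obtain ⟨ξ, hξ⟩ := IsCyclic.exists_generator (α := G ⧸ N)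
  obtain ⟨g, rfl⟩ := QuotientGroup.mk_surjective ξ
  obtain ⟨z, hz⟩ := exists_map_eq_zpow_of_zpow_eq τ g
  have hτ' (a : G) (n : N) : τ (MulAut.conjNormal a n) = τ n :=
    (congrArg τ (Subtype.ext (MulAut.conjNormal_apply a n))).trans (hτ a n n.2)
  obtain ⟨lam, hlam⟩ := exists_monoidHom_restrict_eq_of_zpow_mul τ hτ'
    (exists_eq_zpow_mul_of_forall_mem_zpowers hξ) hz
  exact ⟨lam, fun n hn => hlam ⟨n, hn⟩⟩

/-- If `G/N` is cyclic and `τ` is a `G`-stable linear character of `N`,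
then `τ` extends to a linear character of `G`. -/
theorem stmt_2 {G : Type*} [Group G] [Finite G] (N : Subgroup G) [hN : N.Normal]
    [IsCyclic (G ⧸ N)]
    (τ : N →* ℂˣ)
    (hτ : ∀ (g n : G) (hn : n ∈ N), τ ⟨g * n * g⁻¹, hN.conj_mem n hn g⟩ = τ ⟨n, hn⟩) :
    ∃ lam : G →* ℂˣ, ∀ (n : G) (hn : n ∈ N), lam n = τ ⟨n, hn⟩ :=
  stmt_2_general N (hN := hN) τ hτ
end

section
/- Let N ⊴ G be finite groups with G/N abelian, and let θ be an irreducible complex character of N. If χ₁ and χ₂ are irreducible characters of G such that θ is an irreducible constituent of the restriction of both χ₁ and χ₂ to N, then there exists a linear character η of G with N contained in its kernel such that χ₂ = χ₁·η. -/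
/-!
Since `θ` occurs in both restrictions, the `θ`-component of `χ₁|_N` followed by the inclusion of
`θ` into `χ₂|_N` is a nonzero `N`-map `χ₁ → χ₂`. The space of `N`-maps `χ₁ → χ₂` is a
representation of `G` on which `N` acts trivially, i.e. a representation of the abelian group
`G/N`, so it contains a common eigenvector `φ`, with eigencharacter `η`. Then `φ` is a nonzero
`G`-map `χ₁ ⊗ η → χ₂`, an isomorphism by Schur's lemma, and comparing traces gives
`χ₂ = χ₁ · η`.
-/

open CategoryTheory

namespace Module.End

theorem exists_forall_apply_eq_smul_of_commute {K V ι : Type*} [Field K] [IsAlgClosed K]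
    [AddCommGroup V] [Module K V] [FiniteDimensional K V] [Nontrivial V]
    (f : ι → End K V) (hf : ∀ i j, Commute (f i) (f j)) :
    ∃ v : V, v ≠ 0 ∧ ∃ μ : ι → K, ∀ i, f i v = μ i • v := by
  -- A minimal nonzero subspace invariant under every `f i` lies in an eigenspace of each `f i`,
  -- because its intersection with such an eigenspace is again invariant, by commutativity.
  obtain ⟨p, ⟨hp0, hpf⟩, hmin⟩ := wellFounded_lt.has_min
    {p : Submodule K V | p ≠ ⊥ ∧ ∀ i, ∀ x ∈ p, f i x ∈ p} ⟨⊤, top_ne_bot, fun _ _ _ => trivial⟩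
  have : Nontrivial p := Submodule.nontrivial_iff_ne_bot.mpr hp0
  have hscalar : ∀ i, ∃ μ, p ≤ eigenspace (f i) μ := by
    intro i
    obtain ⟨μ, hμ⟩ := exists_eigenvalue ((f i).restrict (hpf i))
    set q := p ⊓ eigenspace (f i) μ
    have hq0 : q ≠ ⊥ := fun h =>
      hμ (eigenspace_restrict_eq_bot _ (disjoint_iff.mpr (inf_comm p _ ▸ h)))
    have hqf : ∀ j, ∀ x ∈ q, f j x ∈ q := fun j x hx =>
      ⟨hpf j x hx.1, mapsTo_genEigenspace_of_comm (hf i j) μ 1 hx.2⟩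
    exact ⟨μ, inf_eq_left.mp (eq_of_le_of_not_lt inf_le_left (hmin q ⟨hq0, hqf⟩))⟩
  choose μ hμ using hscalar
  obtain ⟨v, hv, hv0⟩ := Submodule.exists_mem_ne_zero_of_ne_bot hp0
  exact ⟨v, hv0, μ, fun i => mem_eigenspace_iff.mp (hμ i hv)⟩

end Module.End

namespace Representation

variable {k G V W : Type*} [Field k] [AddCommGroup V] [Module k V] [AddCommGroup W] [Module k W]

section Monoid

variable [Monoid G]

def twist (ρ : Representation k G V) (η : G →* kˣ) : Representation k G V where
  toFun g := (η g : k) • ρ g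
  map_one' := by simp
  map_mul' g h := by rw [map_mul, map_mul, Units.val_mul, smul_mul_smul_comm]

@[simp]
lemma twist_apply (ρ : Representation k G V) (η : G →* kˣ) (g : G) :
    ρ.twist η g = (η g : k) • ρ g :=
  rfl

lemma char_twist (ρ : Representation k G V) (η : G →* kˣ) (g : G) :
    (ρ.twist η).character g = η g * ρ.character g := by
  simp [character]

def twistSubrepresentationOrderIso (ρ : Representation k G V) (η : G →* kˣ) :
    Subrepresentation ρ ≃o Subrepresentation (ρ.twist η) where
  toFun p := ⟨p.toSubmodule, fun g _ hv => p.toSubmodule.smul_mem _ (p.apply_mem_toSubmodule g hv)⟩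
  invFun p := ⟨p.toSubmodule, fun g v hv => by
    simpa using p.toSubmodule.smul_mem ((η g)⁻¹ : kˣ) (p.apply_mem_toSubmodule g hv)⟩
  left_inv _ := rfl
  right_inv _ := rfl
  map_rel_iff' := Iff.rfl

instance isIrreducible_twist (ρ : Representation k G V) (η : G →* kˣ) [ρ.IsIrreducible] :
    (ρ.twist η).IsIrreducible :=
  (twistSubrepresentationOrderIso ρ η).isSimpleOrder_iff.mp inferInstance

theorem exists_forall_apply_eq_smul [IsAlgClosed k] [IsMulCommutative G] [FiniteDimensional k V]
    [Nontrivial V] (ρ : Representation k G V) :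
    ∃ v : V, v ≠ 0 ∧ ∃ η : G →* k, ∀ g, ρ g v = η g • v := by
  obtain ⟨v, hv0, μ, hμ⟩ := Module.End.exists_forall_apply_eq_smul_of_commute ρ
    fun g h => by simp only [Commute, SemiconjBy, ← map_mul, mul_comm' g h]
  have hcancel : ∀ a b : k, a • v = b • v → a = b := fun a b h => smul_left_injective k hv0 h
  refine ⟨v, hv0, ⟨⟨μ, hcancel _ _ ?_⟩, fun g h => hcancel _ _ ?_⟩, hμ⟩
  · rw [← hμ, map_one, one_smul, Module.End.one_apply]
  · rw [← hμ, map_mul, Module.End.mul_apply, hμ, map_smul, hμ, smul_smul, mul_comm]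

theorem IsIrreducible.comp_ne_zero {U : Type*} [AddCommGroup U] [Module k U]
    {ρ : Representation k G V} {σ : Representation k G W} {τ : Representation k G U}
    [σ.IsIrreducible] {f : IntertwiningMap ρ σ} {g : IntertwiningMap σ τ} (hf : f ≠ 0)
    (hg : g ≠ 0) : g.comp f ≠ 0 := by
  intro h
  apply hg
  ext w
  obtain ⟨v, rfl⟩ := (IsIrreducible.surjective_or_eq_zero f).resolve_right hf w
  exact congr($h v)

end Monoid

section Group

variable [Group G] [FiniteDimensional k V] [FiniteDimensional k W]

theorem exists_intertwiningMap_ne_zero_of_sum_char_ne_zero [Fintype G]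
    [Invertible (Nat.card G : k)]
    (ρ : Representation k G V) (σ : Representation k G W)
    (h : ∑ g : G, σ.character g * ρ.character g⁻¹ ≠ 0) : ∃ f : IntertwiningMap ρ σ, f ≠ 0 := by
  by_contra! hzero
  have : Subsingleton (IntertwiningMap ρ σ) := ⟨fun f g => (hzero f).trans (hzero g).symm⟩
  have := card_inv_mul_sum_char_mul_char_eq_finrank ρ σ
  rw [Module.finrank_zero_of_subsingleton, Nat.cast_zero] at this
  exact h ((mul_eq_zero.mp this).resolve_left (inv_ne_zero (Invertible.ne_zero _)))

theorem exists_equiv_twist_of_intertwiningMap_comp_subtype [IsAlgClosed k]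
    (N : Subgroup G) [N.Normal] [IsMulCommutative (G ⧸ N)]
    {ρ : Representation k G V} {σ : Representation k G W} [ρ.IsIrreducible] [σ.IsIrreducible]
    {f : IntertwiningMap (ρ.comp N.subtype) (σ.comp N.subtype)} (hf : f ≠ 0) :
    ∃ η : G →* kˣ, (∀ n ∈ N, η n = 1) ∧ Nonempty (Equiv (ρ.twist η) σ) := by
  have : Nontrivial (invariants ((linHom ρ σ).comp N.subtype)) :=
    nontrivial_of_ne ((invariantsEquivIntertwiningMap _ _).symm f) 0
      ((LinearEquiv.map_ne_zero_iff _).mpr hf)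
  obtain ⟨φ, hφ0, η, hη⟩ := (quotientToInvariants (linHom ρ σ) N).exists_forall_apply_eq_smul
  refine ⟨(η.comp (QuotientGroup.mk' N)).toHomUnits, fun n hn => ?_, ?_⟩
  · ext
    simp [(QuotientGroup.eq_one_iff n).mpr hn]
  let ψ : IntertwiningMap (ρ.twist (η.comp (QuotientGroup.mk' N)).toHomUnits) σ :=
    (φ : V →ₗ[k] W).intertwiningMap_of_isIntertwiningMap _ _ fun g v => by
      have hφ := congr(($(hη g) : V →ₗ[k] W) (ρ g v))
      simp only [ofQuotient_coe_apply, subrepresentation_apply, LinearMap.coe_restrict_apply,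
        linHom_apply, LinearMap.comp_apply, inv_self_apply, SetLike.val_smul,
        LinearMap.smul_apply] at hφ
      simp [hφ]
  have hψ : ψ ≠ 0 := fun h => hφ0 (Subtype.ext congr(IntertwiningMap.toLinearMap $h))
  exact ⟨ψ.ofBijective ((IsIrreducible.bijective_or_eq_zero ψ).resolve_right hψ)⟩

end Group

end Representation

universe u v

namespace FDRep

variable {k : Type u} {G : Type v} [Field k] [Monoid G]

theorem nontrivial_of_simple (X : FDRep k G) [Simple X] : Nontrivial X := by
  by_contra h
  rw [not_nontrivial_iff_subsingleton] at h
  exact id_nonzero X (ConcreteCategory.hom_ext _ _ fun x => Subsingleton.elim _ _)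

theorem isIrreducible_ρ (X : FDRep k G) [Simple X] : Representation.IsIrreducible X.ρ := by
  have := nontrivial_of_simple X
  have : Nontrivial (Subrepresentation X.ρ) := ⟨⊥, ⊤, fun h => by
    obtain ⟨v, hv⟩ := exists_ne (0 : X)
    have hv' : v ∈ (⊤ : Subrepresentation X.ρ) := Submodule.mem_top
    rw [← h] at hv'
    exact hv hv'⟩
  refine ⟨fun p => or_iff_not_imp_left.mpr fun hp => ?_⟩
  let ι : FDRep.of p.toRepresentation ⟶ X :=
    ⟨FGModuleCat.ofHom p.toSubmodule.subtype, fun _ => rfl⟩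
  have hι : ⇑ι = Subtype.val := rfl
  have : Mono ι := ConcreteCategory.mono_of_injective ι (hι ▸ Subtype.val_injective)
  have : ι ≠ 0 := by
    obtain ⟨v, hv, hv0⟩ := Submodule.exists_mem_ne_zero_of_ne_bot (p := p.toSubmodule)
      fun h => hp (Subrepresentation.toSubmodule_injective h)
    intro h
    exact hv0 (congrArg (fun f : FDRep.of p.toRepresentation ⟶ X => f ⟨v, hv⟩) h)
  have := isIso_of_mono_of_nonzero this
  refine Subrepresentation.toSubmodule_injective (Submodule.eq_top_iff'.mpr fun v => ?_)
  obtain ⟨w, rfl⟩ := (ConcreteCategory.bijective_of_isIso ι).2 v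
  exact w.2

end FDRep

open Representation

theorem stmt_3_general {G : Type} [Group G] (N : Subgroup G) [N.Normal] [Fintype N]
    (hab : ∀ a b : G ⧸ N, a * b = b * a)
    (θ : FDRep ℂ N) [Simple θ] (χ₁ χ₂ : FDRep ℂ G) [Simple χ₁] [Simple χ₂]
    (h₁ : ∑ n : N, χ₁.character (n : G) * θ.character n⁻¹ ≠ 0)
    (h₂ : ∑ n : N, χ₂.character (n : G) * θ.character n⁻¹ ≠ 0) :
    ∃ η : G →* ℂˣ, (∀ n ∈ N, η n = 1) ∧
      ∀ g : G, χ₂.character g = χ₁.character g * (η g : ℂ) := by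
  have : Invertible (Nat.card N : ℂ) := invertibleOfNonzero (Nat.cast_ne_zero.mpr Nat.card_pos.ne')
  have : IsMulCommutative (G ⧸ N) := ⟨⟨hab⟩⟩
  have := θ.isIrreducible_ρ
  have := χ₁.isIrreducible_ρ
  have := χ₂.isIrreducible_ρ
  obtain ⟨f₁, hf₁⟩ :=
    exists_intertwiningMap_ne_zero_of_sum_char_ne_zero (χ₁.ρ.comp N.subtype) θ.ρ <| by
      convert h₁ using 1
      exact Fintype.sum_equiv (Equiv.inv N) _ _ fun n => by
        simp [character, FDRep.character, mul_comm]
  obtain ⟨f₂, hf₂⟩ :=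
    exists_intertwiningMap_ne_zero_of_sum_char_ne_zero θ.ρ (χ₂.ρ.comp N.subtype) h₂
  obtain ⟨η, hηN, ⟨e⟩⟩ :=
    exists_equiv_twist_of_intertwiningMap_comp_subtype N (IsIrreducible.comp_ne_zero hf₁ hf₂)
  refine ⟨η, hηN, fun g => ?_⟩
  rw [mul_comm]
  exact (congr_fun (char_iso e) g).symm.trans (char_twist _ _ _)

/-- If `G/N` is abelian and the irreducible characters `χ₁, χ₂` of `G` both cover an
irreducible character `θ` of `N`, then `χ₂ = χ₁ · η` for some linear character `η` of `G`
trivial on `N`. -/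
theorem stmt_3 {G : Type} [Group G] [Fintype G] (N : Subgroup G) [N.Normal] [Fintype N]
    (hab : ∀ a b : G ⧸ N, a * b = b * a)
    (θ : FDRep ℂ N) [Simple θ] (χ₁ χ₂ : FDRep ℂ G) [Simple χ₁] [Simple χ₂]
    (h₁ : ∑ n : N, χ₁.character (n : G) * θ.character n⁻¹ ≠ 0)
    (h₂ : ∑ n : N, χ₂.character (n : G) * θ.character n⁻¹ ≠ 0) :
    ∃ η : G →* ℂˣ, (∀ n ∈ N, η n = 1) ∧
      ∀ g : G, χ₂.character g = χ₁.character g * (η g : ℂ) :=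
  stmt_3_general N hab θ χ₁ χ₂ h₁ h₂
end

section
/- Let k be an algebraically closed field of characteristic ℓ with Frobenius automorphism σ : λ ↦ λ^ℓ, and let A be a finite dimensional k-algebra. Then A is defined over the finite field F_{ℓ^m} (that is, there exists an F_{ℓ^m}-algebra A₀ with A ≅ k ⊗_{F_{ℓ^m}} A₀) if and only if A ≅ A^{σ^m} as k-algebras. -/
open TensorProduct

/-- The twist of a `k`-algebra by a ring automorphism `τ` of `k`: the same ring, with scalar
multiplication `λ · a = τ⁻¹(λ) a`. -/
def AlgTwist {k : Type*} [CommRing k] (τ : k ≃+* k) (A : Type*) : Type _ := A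

instance {k : Type*} [CommRing k] (τ : k ≃+* k) (A : Type*) [Ring A] :
    Ring (AlgTwist τ A) := ‹Ring A›

noncomputable instance {k : Type*} [CommRing k] (τ : k ≃+* k) (A : Type*) [Ring A]
    [Algebra k A] : Algebra k (AlgTwist τ A) :=
  RingHom.toAlgebra' ((algebraMap k A).comp τ.symm.toRingHom)
    (fun c x => Algebra.commutes (A := A) (τ.symm c) x)

/-
An isomorphism `A ≃ₐ[k] A^τ`, `τ = σ^m`, is the same thing as a ring automorphism `φ` of `A` that
is `q`-semilinear, `φ (λ • a) = λ ^ q • φ a` with `q = ℓ ^ m`. For `A = k ⊗ A₀` take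
`φ = τ ⊗ id`. Conversely, over an algebraically closed field an injective `q`-semilinear map of a
finite-dimensional space has a nonzero fixed vector: in the span of an orbit `v, φ v, φ² v, …`
the fixed-vector equation becomes a polynomial equation in one coordinate. Hence the fixed vectors
span: if their span `U` were proper, a fixed vector of `V ⧸ U` would lift, after an Artin–Schreier
correction, to a fixed vector outside `U`. So `A` has a `k`-basis of fixed vectors. A coordinate `λ` is `τ`-fixed iff
`λ ^ q = λ` iff `λ ∈ 𝔽_q`, so the `𝔽_q`-span of this basis is the fixed subring `A₀ = A^φ` and
`k ⊗ A₀ ≃ A`.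
-/

open Polynomial Finset

theorem FiniteField.mem_range_algebraMap_iff_pow_card_eq {F K : Type*} [Field F] [Fintype F]
    [Field K] [Algebra F K] {x : K} :
    x ∈ Set.range (algebraMap F K) ↔ x ^ Fintype.card F = x := by
  constructor
  · rintro ⟨c, rfl⟩
    rw [← map_pow, FiniteField.pow_card]
  · intro hx
    have hsplit : (X ^ Fintype.card F - X : F[X]).Splits := by
      rw [splits_iff_card_roots, FiniteField.roots_X_pow_card_sub_X,
        FiniteField.X_pow_card_sub_X_natDegree_eq F Fintype.one_lt_card]
      rfl
    obtain ⟨c, hc⟩ := hsplit.mem_range_of_isRoot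
      (FiniteField.X_pow_card_sub_X_ne_zero F Fintype.one_lt_card) (i := algebraMap F K)
      (x := x) (by simp [hx])
    exact ⟨c, hc⟩

section IsAlgClosed

variable {k : Type*} [Field k] [IsAlgClosed k]

theorem IsAlgClosed.exists_pow_add_eq_self {q : ℕ} (hq : 1 < q) (c : k) :
    ∃ t : k, t ^ q + c = t := by
  have hdeg : (X ^ q - X + C c : k[X]).natDegree = q := by
    rw [natDegree_add_C, FiniteField.X_pow_card_sub_X_natDegree_eq k hq]
  obtain ⟨t, ht⟩ := IsAlgClosed.exists_root (X ^ q - X + C c)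
    (natDegree_pos_iff_degree_pos.mp (by omega)).ne'
  refine ⟨t, ?_⟩
  simp only [IsRoot, eval_add, eval_sub, eval_pow, eval_X, eval_C] at ht
  linear_combination ht

theorem IsAlgClosed.exists_ne_zero_eval_eq_self {P : k[X]} (hdvd : X ^ 2 ∣ P)
    (hdeg : 2 ≤ P.natDegree) : ∃ z ≠ 0, P.eval z = z := by
  obtain ⟨H, rfl⟩ := hdvd
  have hH : H ≠ 0 := by rintro rfl; simp at hdeg
  have hdeg' : 0 < (X * H - C 1 : k[X]).natDegree := by
    rw [natDegree_sub_C, natDegree_mul X_ne_zero hH, natDegree_X]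
    omega
  obtain ⟨z, hz⟩ := IsAlgClosed.exists_root _ (natDegree_pos_iff_degree_pos.mp hdeg').ne'
  simp only [IsRoot, eval_sub, eval_mul, eval_X, eval_C, sub_eq_zero] at hz
  refine ⟨z, ?_, ?_⟩
  · rintro rfl
    simp at hz
  · simp only [eval_mul, eval_pow, eval_X]
    linear_combination z * hz

end IsAlgClosed

section Orbit

variable {k V : Type*} [Field k] [AddCommGroup V] [Module k V]

theorem mem_span_range_fin_iff_exists_sum_range (g : ℕ → V) (n : ℕ) (x : V) :
    x ∈ Submodule.span k (Set.range fun i : Fin n => g i) ↔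
      ∃ c : ℕ → k, ∑ i ∈ range n, c i • g i = x := by
  rw [Submodule.mem_span_range_iff_exists_fun]
  constructor
  · rintro ⟨c, rfl⟩
    refine ⟨fun i => if h : i < n then c ⟨i, h⟩ else 0, ?_⟩
    rw [← Fin.sum_univ_eq_sum_range (fun i => (if h : i < n then c ⟨i, h⟩ else 0) • g i)]
    simp
  · rintro ⟨c, rfl⟩
    exact ⟨fun i => c i, Fin.sum_univ_eq_sum_range (fun i => c i • g i) n⟩

theorem linearIndependent_fin_succ_iff_notMem_span (g : ℕ → V) (n : ℕ) :
    LinearIndependent k (fun i : Fin (n + 1) => g i) ↔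
      LinearIndependent k (fun i : Fin n => g i) ∧
        g n ∉ Submodule.span k (Set.range fun i : Fin n => g i) := by
  have : (fun i : Fin (n + 1) => g i) = Fin.snoc (fun i : Fin n => g i) (g n) := by
    funext i
    refine Fin.lastCases ?_ (fun j => ?_) i <;> simp
  rw [this, linearIndependent_finSnoc]

theorem exists_linearIndependent_fin_and_eq_sum [FiniteDimensional k V] (g : ℕ → V)
    (hg : g 0 ≠ 0) : ∃ (s : ℕ) (c : ℕ → k), LinearIndependent k (fun i : Fin (s + 1) => g i) ∧
      g (s + 1) = ∑ i ∈ range (s + 1), c i • g i := by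
  classical
  have hdep : ∃ n, ¬ LinearIndependent k (fun i : Fin (n + 1) => g i) :=
    ⟨Module.finrank k V, fun h => by simpa using h.fintype_card_le_finrank⟩
  have hind : LinearIndependent k (fun i : Fin (Nat.find hdep) => g i) := by
    rcases h : Nat.find hdep with _ | s
    · exact linearIndependent_empty_type
    · exact not_not.mp (Nat.find_min hdep (h ▸ Nat.lt_succ_self s))
  have hmem :
      g (Nat.find hdep) ∈ Submodule.span k (Set.range fun i : Fin (Nat.find hdep) => g i) := by
    by_contra h
    exact Nat.find_spec hdep ((linearIndependent_fin_succ_iff_notMem_span g _).mpr ⟨hind, h⟩)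
  rcases hn : Nat.find hdep with _ | s
  · rw [hn] at hmem
    simp [hg] at hmem
  · rw [hn] at hind hmem
    obtain ⟨c, hc⟩ := (mem_span_range_fin_iff_exists_sum_range g _ _).mp hmem
    exact ⟨s, c, hind, hc.symm⟩

variable {τ : k →+* k}

theorem orbit_relation_coeff_zero_ne_zero (hτ : Function.Surjective τ) {φ : V →ₛₗ[τ] V}
    (hφ : Function.Injective φ) {g : ℕ → V} (hφg : ∀ i, φ (g i) = g (i + 1)) {s : ℕ}
    {c : ℕ → k} (hind : LinearIndependent k (fun i : Fin (s + 1) => g i))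
    (hrel : g (s + 1) = ∑ i ∈ range (s + 1), c i • g i) : c 0 ≠ 0 := by
  intro hc0
  choose d hd using fun i => hτ (c (i + 1))
  have hs : g s = ∑ i ∈ range s, d i • g i := by
    apply hφ
    rw [hφg, hrel, sum_range_succ', hc0, zero_smul, add_zero, map_sum]
    refine sum_congr rfl fun i _ => ?_
    rw [map_smulₛₗ, hd, hφg]
  exact ((linearIndependent_fin_succ_iff_notMem_span g s).mp hind).2
    ((mem_span_range_fin_iff_exists_sum_range g s _).mpr ⟨d, hs.symm⟩)

/-- If `g (s + 1) = ∑ i ≤ s, c i • g i` and `∑ i ≤ s, a i • g i` is fixed by `φ`, comparing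
coefficients gives `a i = (orbitFixedPoly q c i).eval (a s)`. -/
noncomputable def orbitFixedPoly (q : ℕ) (c : ℕ → k) : ℕ → k[X]
  | 0 => C (c 0) * X ^ q
  | i + 1 => orbitFixedPoly q c i ^ q + C (c (i + 1)) * X ^ q

theorem X_pow_dvd_orbitFixedPoly {q : ℕ} (hq : q ≠ 0) (c : ℕ → k) (i : ℕ) :
    X ^ q ∣ orbitFixedPoly q c i := by
  induction i with
  | zero => exact dvd_mul_left _ _
  | succ i ih => exact dvd_add (dvd_pow ih hq) (dvd_mul_left _ _)

theorem le_natDegree_orbitFixedPoly {q : ℕ} (hq : 1 < q) {c : ℕ → k} (hc0 : c 0 ≠ 0) (i : ℕ) :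
    q ≤ (orbitFixedPoly q c i).natDegree := by
  induction i with
  | zero => rw [orbitFixedPoly, natDegree_C_mul_X_pow q _ hc0]
  | succ i ih =>
    have hpow : q * q ≤ (orbitFixedPoly q c i ^ q).natDegree := by
      rw [natDegree_pow]
      exact Nat.mul_le_mul_left q ih
    have hlt : (C (c (i + 1)) * X ^ q).natDegree < (orbitFixedPoly q c i ^ q).natDegree :=
      (natDegree_C_mul_X_pow_le _ _).trans_lt (by nlinarith)
    rw [orbitFixedPoly, natDegree_add_eq_left_of_natDegree_lt hlt]
    nlinarith

theorem exists_fixed_ne_zero_of_orbit [IsAlgClosed k] {q : ℕ} (hq : 1 < q)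
    (hτ : ∀ x, τ x = x ^ q) (φ : V →ₛₗ[τ] V) {g : ℕ → V} (hφg : ∀ i, φ (g i) = g (i + 1))
    {s : ℕ} {c : ℕ → k} (hind : LinearIndependent k (fun i : Fin (s + 1) => g i))
    (hrel : g (s + 1) = ∑ i ∈ range (s + 1), c i • g i) (hc0 : c 0 ≠ 0) :
    ∃ w ≠ 0, φ w = w := by
  obtain ⟨z, hz0, hz⟩ := IsAlgClosed.exists_ne_zero_eval_eq_self
    ((pow_dvd_pow X hq).trans (X_pow_dvd_orbitFixedPoly (by omega) c s))
    (hq.trans_le (le_natDegree_orbitFixedPoly hq hc0 s))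
  set a : ℕ → k := fun i => (orbitFixedPoly q c i).eval z
  have ha0 : a 0 = c 0 * z ^ q := by simp [a, orbitFixedPoly]
  have hasucc : ∀ i, a (i + 1) = a i ^ q + c (i + 1) * z ^ q := by simp [a, orbitFixedPoly]
  have has : a s = z := hz
  refine ⟨∑ i ∈ range (s + 1), a i • g i, fun h => hz0 ?_, ?_⟩
  · rw [← has]
    exact Fintype.linearIndependent_iff.mp hind (fun i => a i)
      (by rwa [Fin.sum_univ_eq_sum_range (fun i => a i • g i)]) (Fin.last s)
  · calc φ (∑ i ∈ range (s + 1), a i • g i)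
        = ∑ i ∈ range s, a i ^ q • g (i + 1) + z ^ q • g (s + 1) := by
          rw [map_sum, sum_range_succ]
          simp only [map_smulₛₗ, hτ, hφg, has]
      _ = ∑ i ∈ range s, (a i ^ q + c (i + 1) * z ^ q) • g (i + 1) + (c 0 * z ^ q) • g 0 := by
          rw [hrel, smul_sum, sum_range_succ']
          simp only [smul_smul, add_smul, sum_add_distrib, mul_comm (z ^ q)]
          abel
      _ = ∑ i ∈ range (s + 1), a i • g i := by
          rw [sum_range_succ' _ s, ha0]
          simp only [hasucc]

theorem exists_fixed_ne_zero [IsAlgClosed k] [FiniteDimensional k V] [Nontrivial V] {q : ℕ}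
    (hq : 1 < q) (hτ : ∀ x, τ x = x ^ q) {φ : V →ₛₗ[τ] V} (hφ : Function.Injective φ) :
    ∃ w ≠ 0, φ w = w := by
  obtain ⟨v, hv⟩ := exists_ne (0 : V)
  have hφg : ∀ i, φ (φ^[i] v) = φ^[i + 1] v := fun i => (Function.iterate_succ_apply' φ i v).symm
  have hτsurj : Function.Surjective τ := fun x => by
    obtain ⟨y, hy⟩ := IsAlgClosed.exists_pow_nat_eq x (by omega : 0 < q)
    exact ⟨y, by rw [hτ, hy]⟩
  obtain ⟨s, c, hind, hrel⟩ :=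
    exists_linearIndependent_fin_and_eq_sum (k := k) (fun i => φ^[i] v) hv
  exact exists_fixed_ne_zero_of_orbit hq hτ φ hφg hind hrel
    (orbit_relation_coeff_zero_ne_zero hτsurj hφ hφg hind hrel)

theorem Submodule.exists_mem_span_apply_eq {s : Set V} (ψ : V →+ V)
    (hψ : ∀ v ∈ s, ∀ c : k, ∃ t : k, ψ (t • v) = c • v) {y : V} (hy : y ∈ Submodule.span k s) :
    ∃ x ∈ Submodule.span k s, ψ x = y := by
  suffices (Submodule.span k s).toAddSubmonoid ≤ (Submodule.span k s).toAddSubmonoid.map ψ from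
    this hy
  conv_lhs => rw [Submodule.span_eq_closure]
  rw [AddSubmonoid.closure_le]
  rintro _ ⟨c, -, v, hv, rfl⟩
  obtain ⟨t, ht⟩ := hψ v hv c
  exact ⟨t • v, Submodule.smul_mem _ t (Submodule.subset_span hv), ht⟩

theorem exists_mem_span_fixedPoints_apply_eq [IsAlgClosed k] {q : ℕ} (hq : 0 < q)
    (hτ : ∀ x, τ x = x ^ q) (φ : V →ₛₗ[τ] V) {y : V}
    (hy : y ∈ Submodule.span k (Function.fixedPoints φ)) :
    ∃ x ∈ Submodule.span k (Function.fixedPoints φ), φ x = y :=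
  Submodule.exists_mem_span_apply_eq φ.toAddMonoidHom (fun v (hv : φ v = v) c => by
    obtain ⟨t, ht⟩ := IsAlgClosed.exists_pow_nat_eq c hq
    exact ⟨t, by simp [hv, hτ, ht]⟩) hy

theorem exists_mem_span_fixedPoints_sub_apply_eq [IsAlgClosed k] {q : ℕ} (hq : 1 < q)
    (hτ : ∀ x, τ x = x ^ q) (φ : V →ₛₗ[τ] V) {y : V}
    (hy : y ∈ Submodule.span k (Function.fixedPoints φ)) :
    ∃ x ∈ Submodule.span k (Function.fixedPoints φ), x - φ x = y :=
  Submodule.exists_mem_span_apply_eq (AddMonoidHom.id V - φ.toAddMonoidHom)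
    (fun v (hv : φ v = v) c => by
      obtain ⟨t, ht⟩ := IsAlgClosed.exists_pow_add_eq_self hq c
      refine ⟨t, ?_⟩
      simp only [AddMonoidHom.sub_apply, AddMonoidHom.id_apply, LinearMap.toAddMonoidHom_coe,
        map_smulₛₗ, hτ, hv, ← sub_smul]
      congr 1
      linear_combination -ht) hy

theorem span_fixedPoints_eq_top [IsAlgClosed k] [FiniteDimensional k V] {q : ℕ} (hq : 1 < q)
    (hτ : ∀ x, τ x = x ^ q) {φ : V →ₛₗ[τ] V} (hφ : Function.Injective φ) :
    Submodule.span k (Function.fixedPoints φ) = ⊤ := by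
  set U := Submodule.span k (Function.fixedPoints φ)
  have hUφ : U ≤ U.comap φ := Submodule.span_le.mpr fun v (hv : φ v = v) => by
    rw [SetLike.mem_coe, Submodule.mem_comap, hv]
    exact Submodule.subset_span hv
  by_contra hU
  have : Nontrivial (V ⧸ U) := Submodule.Quotient.nontrivial_iff.mpr hU
  have hφq : Function.Injective (U.mapQ U φ hUφ) := by
    rw [injective_iff_map_eq_zero]
    intro x hx
    obtain ⟨u, rfl⟩ := U.mkQ_surjective x
    rw [Submodule.mkQ_apply, Submodule.mapQ_apply, Submodule.Quotient.mk_eq_zero] at hx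
    rw [Submodule.mkQ_apply, Submodule.Quotient.mk_eq_zero]
    obtain ⟨y, hyU, hy⟩ := exists_mem_span_fixedPoints_apply_eq (by omega) hτ φ hx
    exact hφ hy ▸ hyU
  obtain ⟨x, hx0, hxfix⟩ := exists_fixed_ne_zero hq hτ hφq
  obtain ⟨u, rfl⟩ := U.mkQ_surjective x
  rw [Submodule.mkQ_apply, Submodule.mapQ_apply, Submodule.Quotient.eq] at hxfix
  obtain ⟨y, hyU, hy⟩ := exists_mem_span_fixedPoints_sub_apply_eq hq hτ φ hxfix
  have hfix : φ (u + y) = u + y := by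
    rw [sub_eq_sub_iff_add_eq_add] at hy
    rw [map_add, add_comm u y, hy]
  have hu : u ∈ U := by
    simpa using U.sub_mem (Submodule.subset_span hfix) hyU
  exact hx0 ((Submodule.Quotient.mk_eq_zero U).mpr hu)

theorem exists_basis_forall_apply_eq_self [IsAlgClosed k] [FiniteDimensional k V] {q : ℕ}
    (hq : 1 < q) (hτ : ∀ x, τ x = x ^ q) {φ : V →ₛₗ[τ] V} (hφ : Function.Injective φ) :
    ∃ (s : Set V) (b : Module.Basis s k V), ∀ i, φ (b i) = b i :=
  have hspan := (span_fixedPoints_eq_top hq hτ hφ).ge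
  ⟨_, .ofSpan hspan, fun i => Module.Basis.ofSpan_subset hspan ⟨i, rfl⟩⟩

theorem Module.Basis.repr_apply_map_eq_of_forall_apply_eq_self {ι : Type*} (b : Module.Basis ι k V)
    {φ : V →ₛₗ[τ] V} (hb : ∀ i, φ (b i) = b i) (x : V) (i : ι) :
    b.repr (φ x) i = τ (b.repr x i) := by
  have : (b.coord i).comp φ = τ.toSemilinearMap.comp (b.coord i) :=
    b.ext fun j => by by_cases h : j = i <;> simp [hb, h]
  exact LinearMap.congr_fun this x

theorem Module.Basis.apply_eq_self_iff_forall_repr {ι : Type*} (b : Module.Basis ι k V)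
    {φ : V →ₛₗ[τ] V} (hb : ∀ i, φ (b i) = b i) (x : V) :
    φ x = x ↔ ∀ i, τ (b.repr x i) = b.repr x i := by
  simp only [← b.repr_apply_map_eq_of_forall_apply_eq_self hb, ← Finsupp.ext_iff,
    b.repr.injective.eq_iff]

end Orbit

section Twist

variable {F k A : Type*} [CommRing k] [Ring A] [Algebra k A] {τ : k ≃+* k}

theorem AlgTwist.algebraMap_apply (c : k) :
    algebraMap k (AlgTwist τ A) c = algebraMap k A (τ.symm c) :=
  rfl

theorem AlgTwist.algEquiv_symm_algebraMap (e : A ≃ₐ[k] AlgTwist τ A) (c : k) :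
    e.symm (algebraMap k A c) = algebraMap k A (τ c) := by
  have h := e.symm.commutes (τ c)
  rwa [AlgTwist.algebraMap_apply, τ.symm_apply_apply] at h

noncomputable def AlgTwist.semilinearOfAlgEquiv (e : A ≃ₐ[k] AlgTwist τ A) :
    A →ₛₗ[(τ : k →+* k)] A where
  toFun := e.symm
  map_add' := map_add e.symm
  map_smul' c x := by
    rw [Algebra.smul_def, Algebra.smul_def]
    exact (map_mul e.symm _ x).trans (congrArg (· * e.symm x) (algEquiv_symm_algebraMap e c))

theorem nonempty_algEquiv_algTwist_of_baseChange [CommRing F] [Algebra F k] {A₀ : Type*}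
    [Ring A₀] [Algebra F A₀] (hτ : ∀ c : F, τ (algebraMap F k c) = algebraMap F k c)
    (ρ : A ≃ₐ[k] k ⊗[F] A₀) : Nonempty (A ≃ₐ[k] AlgTwist τ A) := by
  let e : k ≃ₐ[F] k := AlgEquiv.ofRingEquiv (f := τ.symm) fun c => τ.symm_apply_eq.mpr (hτ c).symm
  let Θ := Algebra.TensorProduct.congr e (AlgEquiv.refl : A₀ ≃ₐ[F] A₀)
  refine ⟨AlgEquiv.ofRingEquiv
    (f := (ρ.toRingEquiv.trans (Θ.toRingEquiv.trans ρ.symm.toRingEquiv) : A ≃+* AlgTwist τ A))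
    fun c => ?_⟩
  change ρ.symm (Θ (ρ (algebraMap k A c))) = algebraMap k A (τ.symm c)
  rw [ρ.commutes, Algebra.TensorProduct.algebraMap_apply, Algebra.TensorProduct.congr_apply,
    Algebra.TensorProduct.map_tmul]
  rw [← ρ.symm.commutes, Algebra.TensorProduct.algebraMap_apply]
  rfl

end Twist

noncomputable def Subalgebra.baseChangeEquivOfBasis {F k A ι : Type*} [CommRing F] [CommRing k]
    [Algebra F k] [Ring A] [Algebra k A] [Algebra F A] [IsScalarTower F k A] (B : Subalgebra F A)
    (bB : Module.Basis ι F B) (b : Module.Basis ι k A) (hb : ∀ i, (bB i : A) = b i) :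
    k ⊗[F] B ≃ₐ[k] A :=
  let Φ := Algebra.TensorProduct.lift (Algebra.ofId k A) B.val fun x y => Algebra.commutes x (y : A)
  AlgEquiv.ofBijective Φ <| by
    have : Φ.toLinearMap = (Algebra.TensorProduct.basis k bB).equiv b (Equiv.refl ι) :=
      (Algebra.TensorProduct.basis k bB).ext fun i => by
        rw [LinearEquiv.coe_coe, Module.Basis.equiv_apply, Algebra.TensorProduct.basis_apply]
        change Algebra.ofId k A 1 * (bB i : A) = b i
        rw [map_one, one_mul, hb]
    rw [← AlgHom.coe_toLinearMap, this]
    exact LinearEquiv.bijective _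

theorem exists_baseChange_algEquiv_of_algEquiv_algTwist {F k A : Type} [Field F] [Fintype F]
    [Field k] [IsAlgClosed k] [Algebra F k] [Ring A] [Algebra k A] [FiniteDimensional k A]
    {τ : k ≃+* k} (hτ : ∀ x, τ x = x ^ Fintype.card F) (e : A ≃ₐ[k] AlgTwist τ A) :
    ∃ (A₀ : Type) (_ : Ring A₀) (_ : Algebra F A₀), Nonempty (A ≃ₐ[k] k ⊗[F] A₀) := by
  let _ : Algebra F A := Algebra.compHom A (algebraMap F k)
  have : IsScalarTower F k A := IsScalarTower.of_algebraMap_eq fun _ => rfl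
  have hτF : ∀ c : F, τ (algebraMap F k c) = algebraMap F k c := fun c => by
    rw [hτ, ← map_pow, FiniteField.pow_card]
  let φ : A →ₐ[F] A :=
    { (e.symm : AlgTwist τ A →+* A) with
      commutes' := fun c => (AlgTwist.algEquiv_symm_algebraMap e _).trans (by rw [hτF]; rfl) }
  let B := AlgHom.equalizer φ (AlgHom.id F A)
  obtain ⟨s, b, hb⟩ := exists_basis_forall_apply_eq_self Fintype.one_lt_card hτ
    (φ := AlgTwist.semilinearOfAlgEquiv e) e.symm.injective
  have hB : Subalgebra.toSubmodule B = Submodule.span F (Set.range b) := by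
    ext x
    rw [Subalgebra.mem_toSubmodule, AlgHom.mem_equalizer, b.mem_span_iff_repr_mem F]
    change AlgTwist.semilinearOfAlgEquiv e x = x ↔ _
    rw [b.apply_eq_self_iff_forall_repr hb]
    exact forall_congr' fun i => by
      rw [RingEquiv.coe_toRingHom, hτ, FiniteField.mem_range_algebraMap_iff_pow_card_eq]
  let bB : Module.Basis s F B :=
    (b.restrictScalars F).map ((LinearEquiv.ofEq _ _ hB.symm).trans B.toSubmoduleEquiv)
  exact ⟨B, inferInstance, inferInstance,
    ⟨(B.baseChangeEquivOfBasis bB b fun i => b.restrictScalars_apply F i).symm⟩⟩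

theorem RingAut.pow_apply_eq_pow {R : Type*} [Semiring R] {σ : RingAut R} {ℓ : ℕ}
    (hσ : ∀ x, σ x = x ^ ℓ) (n : ℕ) (x : R) : (σ ^ n) x = x ^ ℓ ^ n := by
  induction n generalizing x with
  | zero => simp
  | succ n ih => rw [pow_succ, RingAut.mul_apply, hσ, ih, ← pow_mul, ← pow_succ']

theorem stmt_9_general (ℓ : ℕ) [Fact ℓ.Prime] (k : Type) [Field k] [IsAlgClosed k]
    (σ : RingAut k) (hσ : ∀ x : k, σ x = x ^ ℓ)
    (m : ℕ) (hm : 0 < m) [Algebra (GaloisField ℓ m) k]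
    (A : Type) [Ring A] [Algebra k A] [FiniteDimensional k A] :
    (∃ (A₀ : Type) (_ : Ring A₀) (_ : Algebra (GaloisField ℓ m) A₀),
        Nonempty (A ≃ₐ[k] (k ⊗[GaloisField ℓ m] A₀))) ↔
      Nonempty (A ≃ₐ[k] AlgTwist (σ ^ m) A) := by
  let _ := Fintype.ofFinite (GaloisField ℓ m)
  have hcard : Fintype.card (GaloisField ℓ m) = ℓ ^ m := by
    rw [← Nat.card_eq_fintype_card]
    exact GaloisField.card ℓ m hm.ne'
  have hτ : ∀ x, (σ ^ m) x = x ^ Fintype.card (GaloisField ℓ m) := by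
    rw [hcard]
    exact RingAut.pow_apply_eq_pow hσ m
  constructor
  · rintro ⟨A₀, _, _, ⟨ρ⟩⟩
    exact nonempty_algEquiv_algTwist_of_baseChange
      (fun c => by rw [hτ, ← map_pow, FiniteField.pow_card]) ρ
  · rintro ⟨e⟩
    exact exists_baseChange_algEquiv_of_algEquiv_algTwist hτ e

/-- A finite dimensional algebra `A` over `k = F̄_ℓ` is defined over `F_{ℓ^m}`
if and only if `A ≅ A^{σ^m}` as `k`-algebras, `σ` being the Frobenius `λ ↦ λ^ℓ`. -/
theorem stmt_9 (ℓ : ℕ) [Fact ℓ.Prime] (k : Type) [Field k] [IsAlgClosed k] [CharP k ℓ]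
    (σ : RingAut k) (hσ : ∀ x : k, σ x = x ^ ℓ)
    (m : ℕ) (hm : 0 < m) [Algebra (GaloisField ℓ m) k]
    (A : Type) [Ring A] [Algebra k A] [FiniteDimensional k A] :
    (∃ (A₀ : Type) (_ : Ring A₀) (_ : Algebra (GaloisField ℓ m) A₀),
        Nonempty (A ≃ₐ[k] (k ⊗[GaloisField ℓ m] A₀))) ↔
      Nonempty (A ≃ₐ[k] AlgTwist (σ ^ m) A) :=
  stmt_9_general ℓ k σ hσ m hm A
end

section
/- Let K be the fraction field of an absolutely unramified complete discrete valuation ring O with residue field the algebraic closure of F_ℓ, let σ̂ be the automorphism of K lifting the Frobenius of the residue field, and let K̄ be an algebraic closure of K. Then there exists a field automorphism τ : K̄ → K̄ extending σ̂ such that τ(ζ) = ζ for every root of unity ζ in K̄ of ℓ-power order. -/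
/-!
Since `O` is unramified, `ℓ` is a uniformizer of `O`, so Eisenstein's criterion makes every
cyclotomic polynomial `Φ_{ℓ^n}` irreducible over `K`. It is then the minimal polynomial of any
primitive `ℓ^n`-th root of unity `ζ_n`, and it is fixed by `σ̂`, so `σ̂` extends to an embedding
`K(ζ_n) → K̄` fixing `ζ_n`. For a compatible tower `ζ_{n+1}^ℓ = ζ_n` these embeddings are
compatible, hence glue to `K(ζ_n : n ∈ ℕ)` and extend to `K̄`. The result fixes every `ℓ`-power
root of unity, being a power of some `ζ_n`, and is onto because `K̄` is integral over its image.
-/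

open Polynomial IntermediateField

theorem cyclotomic_prime_pow_comp_X_add_one_isEisensteinAt_of_prime {R : Type*} [CommRing R]
    [IsDomain R] {ℓ : ℕ} [Fact ℓ.Prime] (hℓ : Prime (ℓ : R)) (n : ℕ) :
    ((cyclotomic (ℓ ^ (n + 1)) R).comp (X + 1)).IsEisensteinAt (Ideal.span {(ℓ : R)}) := by
  have hmap : (cyclotomic (ℓ ^ (n + 1)) R).comp (X + 1) =
      ((cyclotomic (ℓ ^ (n + 1)) ℤ).comp (X + 1)).map (Int.castRingHom R) := by
    simp [Polynomial.map_comp]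
  have hspan : (Ideal.span {(ℓ : ℤ)}).map (Int.castRingHom R) = Ideal.span {(ℓ : R)} := by
    simp [Ideal.map_span]
  have hmonic : ((cyclotomic (ℓ ^ (n + 1)) R).comp (X + 1)).Monic := by
    simpa using (cyclotomic.monic _ R).comp_X_add_C 1
  refine hmonic.isEisensteinAt_of_mem_of_notMem ?_ (fun hi => ?_) ?_
  · exact (Ideal.isPrime_span_singleton_of_prime hℓ).ne_top
  · rw [hmap, ← hspan]
    exact ((cyclotomic_prime_pow_comp_X_add_one_isEisensteinAt ℓ n).isWeaklyEisensteinAt.map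
      _).mem (by rwa [← hmap])
  · rw [coeff_zero_eq_eval_zero, eval_comp, eval_add, eval_X, eval_one, zero_add,
      eval_one_cyclotomic_prime_pow, Ideal.span_singleton_pow, Ideal.mem_span_singleton]
    intro h
    have := (pow_dvd_pow_iff hℓ.ne_zero hℓ.not_isUnit).1 (h.trans (pow_one _).symm.dvd)
    omega

theorem irreducible_cyclotomic_prime_pow_of_prime {R K : Type*} [CommRing R] [IsDomain R]
    [IsIntegrallyClosed R] [Field K] [Algebra R K] [IsFractionRing R K] {ℓ : ℕ} [Fact ℓ.Prime]
    (hℓ : Prime (ℓ : R)) (n : ℕ) : Irreducible (cyclotomic (ℓ ^ n) K) := by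
  cases n with
  | zero => simpa using irreducible_X_sub_C (1 : K)
  | succ n =>
    have hEis := cyclotomic_prime_pow_comp_X_add_one_isEisensteinAt_of_prime hℓ n
    have hmonic : ((cyclotomic (ℓ ^ (n + 1)) R).comp (X + 1)).Monic := by
      simpa using (cyclotomic.monic _ R).comp_X_add_C 1
    have hcomp : Irreducible ((cyclotomic (ℓ ^ (n + 1)) R).comp (X + 1)) :=
      hEis.irreducible (Ideal.isPrime_span_singleton_of_prime hℓ) hmonic.isPrimitive
        (by
          rw [natDegree_comp, ← C_1, natDegree_X_add_C, natDegree_cyclotomic, mul_one]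
          exact Nat.totient_pos.2 (pow_pos (Fact.out : ℓ.Prime).pos _))
    have hR : Irreducible (cyclotomic (ℓ ^ (n + 1)) R) := by
      rw [← MulEquiv.irreducible_iff (taylorEquiv (1 : R)).toMulEquiv]
      change Irreducible (taylor 1 _)
      simpa [taylor_apply] using hcomp
    simpa using (cyclotomic.monic _ R).irreducible_iff_irreducible_map_fraction_map.1 hR

structure IsPrimitiveRootTower {M : Type*} [CommMonoid M] (ℓ : ℕ) (ζ : ℕ → M) : Prop where
  isPrimitiveRoot : ∀ n, IsPrimitiveRoot (ζ n) (ℓ ^ n)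
  pow_eq : ∀ n, ζ (n + 1) ^ ℓ = ζ n

theorem IsPrimitiveRoot.exists_pow_eq_isPrimitiveRoot_prime_pow_succ {F : Type*} [Field F]
    [IsAlgClosed F] {ℓ : ℕ} [Fact ℓ.Prime] [NeZero (ℓ : F)] {n : ℕ} {z : F}
    (hz : IsPrimitiveRoot z (ℓ ^ n)) : ∃ y : F, y ^ ℓ = z ∧ IsPrimitiveRoot y (ℓ ^ (n + 1)) := by
  have hℓ : ℓ.Prime := Fact.out
  cases n with
  | zero =>
    obtain ⟨y, hy⟩ := HasEnoughRootsOfUnity.exists_primitiveRoot F ℓ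
    rw [pow_zero, IsPrimitiveRoot.one_right_iff] at hz
    exact ⟨y, hz ▸ hy.pow_eq_one, by rwa [zero_add, pow_one]⟩
  | succ n =>
    obtain ⟨y, hy⟩ := IsAlgClosed.exists_pow_nat_eq z hℓ.pos
    refine ⟨y, hy, IsPrimitiveRoot.iff_orderOf.2 (orderOf_eq_prime_pow ?_ ?_)⟩
    · rw [pow_succ', pow_mul, hy]
      exact hz.pow_ne_one_of_pos_of_lt (pow_ne_zero _ hℓ.ne_zero)
        (Nat.pow_lt_pow_right hℓ.one_lt n.lt_succ_self)
    · rw [pow_succ', pow_mul, hy, hz.pow_eq_one]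

theorem exists_isPrimitiveRootTower (F : Type*) [Field F] [IsAlgClosed F] (ℓ : ℕ)
    [Fact ℓ.Prime] [NeZero (ℓ : F)] : ∃ ζ : ℕ → F, IsPrimitiveRootTower ℓ ζ := by
  choose! root root_pow root_prim using fun n (z : F) (hz : IsPrimitiveRoot z (ℓ ^ n)) =>
    hz.exists_pow_eq_isPrimitiveRoot_prime_pow_succ
  let ζ : ℕ → F := fun n => Nat.rec 1 root n
  have hζ : ∀ n, IsPrimitiveRoot (ζ n) (ℓ ^ n) := by
    intro n
    induction n with
    | zero => exact pow_zero ℓ ▸ IsPrimitiveRoot.one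
    | succ n ih => exact root_prim n _ ih
  exact ⟨ζ, hζ, fun n => root_pow n _ (hζ n)⟩

theorem IsPrimitiveRoot.aeval_cyclotomic_eq_zero {R A : Type*} [CommRing R] [CommRing A]
    [IsDomain A] [Algebra R A] {m : ℕ} (hm : 0 < m) {x : A} (hx : IsPrimitiveRoot x m) :
    aeval x (cyclotomic m R) = 0 := by
  rw [aeval_def, eval₂_eq_eval_map, map_cyclotomic]
  exact hx.isRoot_cyclotomic hm

theorem exists_algHom_adjoin_primitiveRoot {K L M : Type*} [Field K] [Field L] [Algebra K L]
    [Field M] [Algebra K M] {m : ℕ} (hm : 0 < m) (hirr : Irreducible (cyclotomic m K)) {ζ : L}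
    (hζ : IsPrimitiveRoot ζ m) {ξ : M} (hξ : IsPrimitiveRoot ξ m) :
    ∃ f : K⟮ζ⟯ →ₐ[K] M, f (AdjoinSimple.gen K ζ) = ξ := by
  have hint : IsIntegral K ζ := ⟨_, cyclotomic.monic m K, hζ.aeval_cyclotomic_eq_zero hm⟩
  have hmin : minpoly K ζ = cyclotomic m K := (minpoly.eq_of_irreducible_of_monic hirr
    (hζ.aeval_cyclotomic_eq_zero hm) (cyclotomic.monic m K)).symm
  have hroot : ξ ∈ (minpoly K ζ).aroots M :=
    mem_aroots.2 ⟨minpoly.ne_zero hint, hmin ▸ hξ.aeval_cyclotomic_eq_zero hm⟩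
  exact ⟨(algHomAdjoinIntegralEquiv K hint).symm ⟨ξ, hroot⟩,
    algHomAdjoinIntegralEquiv_symm_apply_gen K hint _⟩

theorem exists_ringHom_map_isPrimitiveRootTower {K L M : Type*} [Field K] [Field L]
    [Algebra K L] [Algebra.IsAlgebraic K L] [Field M] [IsAlgClosed M] {ℓ : ℕ} (hℓ : 0 < ℓ)
    (hirr : ∀ n, Irreducible (cyclotomic (ℓ ^ n) K)) (j : K →+* M)
    {ζ : ℕ → L} (hζ : IsPrimitiveRootTower ℓ ζ) {ξ : ℕ → M} (hξ : IsPrimitiveRootTower ℓ ξ) :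
    ∃ φ : L →+* M, (∀ x, φ (algebraMap K L x) = j x) ∧ ∀ n, φ (ζ n) = ξ n := by
  let : Algebra K M := j.toAlgebra
  choose f hf using fun n => exists_algHom_adjoin_primitiveRoot (pow_pos hℓ n) (hirr n)
    (hζ.isPrimitiveRoot n) (hξ.isPrimitiveRoot n)
  have hle : ∀ n, K⟮ζ n⟯ ≤ K⟮ζ (n + 1)⟯ := fun n =>
    adjoin_simple_le_iff.2 (hζ.pow_eq n ▸ pow_mem (mem_adjoin_simple_self K _) ℓ)
  have hf_succ : ∀ n, f (n + 1) (inclusion (hle n) (AdjoinSimple.gen K (ζ n))) = ξ n := by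
    intro n
    have : inclusion (hle n) (AdjoinSimple.gen K (ζ n)) = AdjoinSimple.gen K (ζ (n + 1)) ^ ℓ :=
      Subtype.ext (hζ.pow_eq n).symm
    rw [this, map_pow, hf, hξ.pow_eq]
  let lift : ℕ → Lifts K L M := fun n => ⟨K⟮ζ n⟯, f n⟩
  have hmono : Monotone lift := monotone_nat_of_le_succ fun n =>
    Lifts.le_iff.2 ⟨hle n, adjoin_algHom_ext K fun x hx => by
      obtain rfl := Set.mem_singleton_iff.1 hx
      exact (hf_succ n).trans (hf n).symm⟩
  obtain ⟨ub, hub⟩ := Lifts.exists_upper_bound _ hmono.isChain_range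
  obtain ⟨φ, hφ⟩ := exists_algHom_of_splits
    (fun s => ⟨(Algebra.IsAlgebraic.isAlgebraic s).isIntegral, IsAlgClosed.splits _⟩) ub.emb
  refine ⟨φ.toRingHom, φ.commutes, fun n => ?_⟩
  obtain ⟨hcarrier, hemb⟩ := hub (lift n) ⟨n, rfl⟩
  calc φ (ζ n) = (φ.comp ub.carrier.val) (inclusion hcarrier (AdjoinSimple.gen K (ζ n))) := rfl
    _ = f n (AdjoinSimple.gen K (ζ n)) := by rw [hφ]; exact hemb _
    _ = ξ n := hf n

theorem exists_ringHom_extend_fixing_rootsOfUnity_prime_pow {K L : Type*} [Field K] [Field L]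
    [Algebra K L] [Algebra.IsAlgebraic K L] [IsAlgClosed L] {ℓ : ℕ} [Fact ℓ.Prime]
    [NeZero (ℓ : K)] (hirr : ∀ n, Irreducible (cyclotomic (ℓ ^ n) K)) (j : K →+* L) :
    ∃ φ : L →+* L, (∀ x, φ (algebraMap K L x) = j x) ∧
      ∀ z : L, (∃ n : ℕ, z ^ ℓ ^ n = 1) → φ z = z := by
  have : NeZero (ℓ : L) := NeZero.nat_of_injective (algebraMap K L).injective
  obtain ⟨ζ, hζ⟩ := exists_isPrimitiveRootTower L ℓ
  obtain ⟨φ, hφK, hφζ⟩ :=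
    exists_ringHom_map_isPrimitiveRootTower (Fact.out : ℓ.Prime).pos hirr j hζ hζ
  refine ⟨φ, hφK, fun z ⟨n, hz⟩ => ?_⟩
  have : NeZero (ℓ ^ n) := ⟨pow_ne_zero n (Fact.out : ℓ.Prime).ne_zero⟩
  obtain ⟨i, -, rfl⟩ := (hζ.isPrimitiveRoot n).eq_pow_of_pow_eq_one hz
  rw [map_pow, hφζ]

theorem IsAlgClosed.ringHom_bijective_of_comp_algebraMap {K L : Type*} [Field K] [Field L]
    [Algebra K L] [Algebra.IsIntegral K L] [IsAlgClosed L] {σ : K →+* K}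
    (hσ : Function.Surjective σ) (φ : L →+* L)
    (h : φ.comp (algebraMap K L) = (algebraMap K L).comp σ) : Function.Bijective φ := by
  have hint : (φ.comp (algebraMap K L)).IsIntegral := by
    rw [h]
    exact (RingHom.isIntegral_of_surjective σ hσ).trans _ _ Algebra.IsIntegral.isIntegral
  exact IsAlgClosed.ringHom_bijective_of_isIntegral φ hint.tower_top

theorem stmt_12_general {ℓ : ℕ} (hℓ : ℓ.Prime) {O : Type} [CommRing O] [IsDomain O]
    [IsDiscreteValuationRing O]
    (hunram : IsLocalRing.maximalIdeal O = Ideal.span {(ℓ : O)})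
    (σK : FractionRing O ≃+* FractionRing O) :
    ∃ τ : AlgebraicClosure (FractionRing O) ≃+* AlgebraicClosure (FractionRing O),
      (∀ x : FractionRing O,
        τ (algebraMap (FractionRing O) (AlgebraicClosure (FractionRing O)) x) =
          algebraMap (FractionRing O) (AlgebraicClosure (FractionRing O)) (σK x)) ∧
      ∀ ζ : AlgebraicClosure (FractionRing O), (∃ n : ℕ, ζ ^ ℓ ^ n = 1) → τ ζ = ζ := by
  have : Fact ℓ.Prime := ⟨hℓ⟩
  have hℓ0 : (ℓ : O) ≠ 0 := fun h =>
    IsDiscreteValuationRing.not_a_field O (by rw [hunram, h, Ideal.span_singleton_eq_bot])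
  have hprime : Prime (ℓ : O) := (Ideal.span_singleton_prime hℓ0).1
    (hunram ▸ (IsLocalRing.maximalIdeal.isMaximal O).isPrime)
  have : NeZero (ℓ : O) := ⟨hℓ0⟩
  have : NeZero (ℓ : FractionRing O) := NeZero.nat_of_injective (IsFractionRing.injective O _)
  obtain ⟨φ, hφK, hφζ⟩ := exists_ringHom_extend_fixing_rootsOfUnity_prime_pow
    (irreducible_cyclotomic_prime_pow_of_prime hprime)
    ((algebraMap _ (AlgebraicClosure (FractionRing O))).comp σK.toRingHom)
  have hbij := IsAlgClosed.ringHom_bijective_of_comp_algebraMap σK.surjective φ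
    (RingHom.ext hφK)
  exact ⟨RingEquiv.ofBijective φ hbij, hφK, hφζ⟩

/-- Let `O` be an absolutely unramified complete discrete valuation ring with
residue field `F̄_ℓ`, `K` its fraction field, `σ̂K` the automorphism of `K` lifting the Frobenius
of the residue field. Then there is a field automorphism `τ` of the algebraic closure `K̄`
extending `σ̂K` which fixes every root of unity of `ℓ`-power order. -/
theorem stmt_12 {ℓ : ℕ} (hℓ : ℓ.Prime) {O : Type} [CommRing O] [IsDomain O]
    [IsDiscreteValuationRing O] [CharZero O]
    [IsAdicComplete (IsLocalRing.maximalIdeal O) O]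
    [IsAlgClosed (IsLocalRing.ResidueField O)]
    (hchar : CharP (IsLocalRing.ResidueField O) ℓ)
    (hunram : IsLocalRing.maximalIdeal O = Ideal.span {(ℓ : O)})
    (σ : O ≃+* O)
    (hσ : ∀ x : O, IsLocalRing.residue O (σ x) = IsLocalRing.residue O x ^ ℓ)
    (σK : FractionRing O ≃+* FractionRing O)
    (hσK : ∀ x : O, σK (algebraMap O (FractionRing O) x) =
      algebraMap O (FractionRing O) (σ x)) :
    ∃ τ : AlgebraicClosure (FractionRing O) ≃+* AlgebraicClosure (FractionRing O),
      (∀ x : FractionRing O,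
        τ (algebraMap (FractionRing O) (AlgebraicClosure (FractionRing O)) x) =
          algebraMap (FractionRing O) (AlgebraicClosure (FractionRing O)) (σK x)) ∧
      ∀ ζ : AlgebraicClosure (FractionRing O), (∃ n : ℕ, ζ ^ ℓ ^ n = 1) → τ ζ = ζ :=
  stmt_12_general hℓ hunram σK
end
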